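/- For any worms A, B in worm normal form with all modalities ≥ α, there exists a worm C with all modalities ≥ α such that GLP_Λ proves (A ∧ B) ↔ C; moreover, the modalities of C are among those of A and B, and the length of C is at most the sum of the lengths of A and B. -/

import Mathlib

inductive Formula (L : Type) : Type where
  | bot : Formula L
  | var : Nat → Formula L
  | imp : Formula L → Formula L → Formula L
  | box : L → Formula L → Formula L

namespace Formula

variable {L : Type}

def neg (φ : Formula L) : Formula L := imp φ bot
def top : Formula L := neg bot
def and (φ ψ : Formula L) : Formula L := neg (imp φ ψ.neg)
def or (φ ψ : Formula L) : Formula L := imp φ.neg ψ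
def iff (φ ψ : Formula L) : Formula L := (imp φ ψ).and (imp ψ φ)
def dia (α : L) (φ : Formula L) : Formula L := neg (box α φ.neg)

end Formula

open Formula

/-- Provability in the polymodal provability logic `GLP_Λ` over a linear order. -/
inductive GLP {L : Type} [LinearOrder L] : Formula L → Prop where
  | k1 : ∀ φ ψ : Formula L, GLP (φ.imp (ψ.imp φ))
  | k2 : ∀ φ ψ χ : Formula L, GLP ((φ.imp (ψ.imp χ)).imp ((φ.imp ψ).imp (φ.imp χ)))
  | k3 : ∀ φ ψ : Formula L, GLP ((φ.neg.imp ψ.neg).imp (ψ.imp φ))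
  | dist : ∀ (α : L) (φ ψ : Formula L), GLP ((Formula.box α (φ.imp ψ)).imp ((Formula.box α φ).imp (Formula.box α ψ)))
  | lob : ∀ (α : L) (φ : Formula L), GLP ((Formula.box α ((Formula.box α φ).imp φ)).imp (Formula.box α φ))
  | trans : ∀ (α β : L) (φ : Formula L), α ≤ β → GLP ((Formula.box α φ).imp (Formula.box β (Formula.box α φ)))
  | negintro : ∀ (α β : L) (φ : Formula L), α < β → GLP ((dia α φ).imp (Formula.box β (dia α φ)))
  | mono : ∀ (α β : L) (φ : Formula L), α ≤ β → GLP ((Formula.box α φ).imp (Formula.box β φ))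
  | mp : ∀ φ ψ : Formula L, GLP (φ.imp ψ) → GLP φ → GLP ψ
  | nec : ∀ (α : L) (φ : Formula L), GLP φ → GLP (Formula.box α φ)

/-- The worm (iterated consistency statement) associated to a list of modalities. -/
def worm {L : Type} : List L → Formula L
  | [] => Formula.top
  | α :: w => Formula.dia α (worm w)

/-- `Lt α A B` iff `GLP ⊢ B → ⟨α⟩A`. -/
def Lt {L : Type} [LinearOrder L] (α : L) (A B : List L) : Prop :=
  GLP ((worm B).imp (Formula.dia α (worm A)))

def Le {L : Type} [LinearOrder L] (α : L) (A B : List L) : Prop :=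
  Lt α A B ∨ A = B

/-- Join a list of blocks, separating consecutive blocks by the modality `α`. -/
def joinSep {L : Type} (α : L) : List (List L) → List L
  | [] => []
  | [p] => p
  | p :: ps => p ++ α :: joinSep α ps

/-- Worm normal form. -/
inductive WNF {L : Type} [LinearOrder L] [SuccOrder L] : List L → Prop where
  | nil : WNF []
  | node (α : L) (parts : List (List L))
      (hlen : 2 ≤ parts.length)
      (hmods : ∀ p ∈ parts, ∀ β ∈ p, α < β)
      (hwnf : ∀ p ∈ parts, WNF p)
      (hord : parts.Chain' (Le (Order.succ α)))
      : WNF (joinSep α parts)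

/-!
Split every worm at its least modality. If `A = p δ R` with `δ` the separator of its normal form,
then all modalities of `p` exceed `δ` and `A ↔ p ∧ ⟨δ⟩R`. When the separators of `A` and `B`
differ, say `δ < δ'`, the conjunct `⟨δ⟩R` can be pulled out of `A ∧ B` and we recurse on `p ∧ B`.
When they coincide, we recurse on the heads `p ∧ q` and keep only the stronger of `⟨δ⟩R` and
`⟨δ⟩S`: the worms in normal form are linearly ordered by `<_δ`, which is proved by comparing
the blocks of the two normal forms from the right.
-/

namespace GLP

variable {L : Type} [LinearOrder L]

/-- Necessitation is applied only to theorems of `GLP`, never to hypotheses, so the deduction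
theorem holds. -/
inductive Entails (Γ : List (Formula L)) : Formula L → Prop where
  | hyp {φ} : φ ∈ Γ → Entails Γ φ
  | thm {φ} : GLP φ → Entails Γ φ
  | mp {φ ψ} : Entails Γ (φ.imp ψ) → Entails Γ φ → Entails Γ ψ

theorem imp_refl (φ : Formula L) : GLP (φ.imp φ) :=
  mp _ _ (mp _ _ (k2 φ (φ.imp φ) φ) (k1 φ (φ.imp φ))) (k1 φ φ)

namespace Entails

variable {Γ : List (Formula L)} {φ ψ χ : Formula L}

theorem deduction (h : Entails (φ :: Γ) ψ) : Entails Γ (φ.imp ψ) := by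
  induction h with
  | hyp hm =>
    rcases List.mem_cons.1 hm with rfl | hm
    · exact thm (imp_refl _)
    · exact mp (thm (k1 _ _)) (hyp hm)
  | thm h => exact mp (thm (k1 _ _)) (thm h)
  | mp _ _ ih₁ ih₂ => exact mp (mp (thm (k2 _ _ _)) ih₁) ih₂

theorem glp (h : Entails [] φ) : GLP φ := by
  induction h with
  | hyp hm => simp at hm
  | thm h => exact h
  | mp _ _ ih₁ ih₂ => exact GLP.mp _ _ ih₁ ih₂

theorem hyp₀ : Entails (φ :: Γ) φ := hyp (by simp)

theorem hyp₁ : Entails (ψ :: φ :: Γ) φ := hyp (by simp)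

theorem hyp₂ : Entails (χ :: ψ :: φ :: Γ) φ := hyp (by simp)

end Entails

variable {φ ψ χ φ' ψ' : Formula L}

theorem imp_trans (h₁ : GLP (φ.imp ψ)) (h₂ : GLP (ψ.imp χ)) : GLP (φ.imp χ) :=
  Entails.glp <| .deduction <| .mp (.thm h₂) (.mp (.thm h₁) .hyp₀)

theorem imp_top (φ : Formula L) : GLP (φ.imp top) :=
  mp _ _ (k1 _ _) (imp_refl bot)

theorem bot_imp (φ : Formula L) : GLP (bot.imp φ) :=
  mp _ _ (k3 φ bot) (mp _ _ (k1 _ _) (imp_refl bot))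

theorem imp_neg_neg (φ : Formula L) : GLP (φ.imp φ.neg.neg) :=
  Entails.glp <| .deduction <| .deduction <| .mp .hyp₀ .hyp₁

theorem neg_neg_imp (φ : Formula L) : GLP (φ.neg.neg.imp φ) :=
  mp _ _ (k3 φ φ.neg.neg) (imp_neg_neg φ.neg)

theorem contrapose (h : GLP (φ.imp ψ)) : GLP (ψ.neg.imp φ.neg) :=
  Entails.glp <| .deduction <| .deduction <| .mp .hyp₁ (.mp (.thm h) .hyp₀)

theorem and_left (φ ψ : Formula L) : GLP ((φ.and ψ).imp φ) := by
  have h : GLP (φ.neg.imp (φ.imp ψ.neg)) :=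
    Entails.glp <| .deduction <| .deduction <| .mp (.thm (bot_imp ψ.neg)) (.mp .hyp₁ .hyp₀)
  exact imp_trans (contrapose h) (neg_neg_imp φ)

theorem and_right (φ ψ : Formula L) : GLP ((φ.and ψ).imp ψ) :=
  imp_trans (contrapose (k1 ψ.neg φ)) (neg_neg_imp ψ)

theorem imp_imp_and (φ ψ : Formula L) : GLP (φ.imp (ψ.imp (φ.and ψ))) :=
  Entails.glp <| .deduction <| .deduction <| .deduction <| .mp (.mp .hyp₀ .hyp₂) .hyp₁

theorem imp_and (h₁ : GLP (χ.imp φ)) (h₂ : GLP (χ.imp ψ)) : GLP (χ.imp (φ.and ψ)) :=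
  Entails.glp <| .deduction <|
    .mp (.mp (.thm (imp_imp_and φ ψ)) (.mp (.thm h₁) .hyp₀)) (.mp (.thm h₂) .hyp₀)

theorem iff_intro (h₁ : GLP (φ.imp ψ)) (h₂ : GLP (ψ.imp φ)) : GLP (φ.iff ψ) :=
  mp _ _ (mp _ _ (imp_imp_and _ _) h₁) h₂

theorem iff_mp (h : GLP (φ.iff ψ)) : GLP (φ.imp ψ) :=
  mp _ _ (and_left _ _) h

theorem iff_mpr (h : GLP (φ.iff ψ)) : GLP (ψ.imp φ) :=
  mp _ _ (and_right _ _) h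

theorem iff_trans (h₁ : GLP (φ.iff ψ)) (h₂ : GLP (ψ.iff χ)) : GLP (φ.iff χ) :=
  iff_intro (imp_trans (iff_mp h₁) (iff_mp h₂)) (imp_trans (iff_mpr h₂) (iff_mpr h₁))

theorem iff_symm (h : GLP (φ.iff ψ)) : GLP (ψ.iff φ) :=
  iff_intro (iff_mpr h) (iff_mp h)

theorem and_congr (h₁ : GLP (φ.iff φ')) (h₂ : GLP (ψ.iff ψ')) :
    GLP ((φ.and ψ).iff (φ'.and ψ')) :=
  iff_intro
    (imp_and (imp_trans (and_left _ _) (iff_mp h₁)) (imp_trans (and_right _ _) (iff_mp h₂)))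
    (imp_and (imp_trans (and_left _ _) (iff_mpr h₁)) (imp_trans (and_right _ _) (iff_mpr h₂)))

theorem and_congr_left (h : GLP (φ.iff φ')) : GLP ((φ.and ψ).iff (φ'.and ψ)) :=
  and_congr h (iff_intro (imp_refl ψ) (imp_refl ψ))

theorem and_comm (φ ψ : Formula L) : GLP ((φ.and ψ).iff (ψ.and φ)) :=
  iff_intro (imp_and (and_right _ _) (and_left _ _)) (imp_and (and_right _ _) (and_left _ _))

theorem and_iff_left_of_imp (h : GLP (φ.imp ψ)) : GLP ((φ.and ψ).iff φ) :=
  iff_intro (and_left _ _) (imp_and (imp_refl φ) h)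

theorem and_iff_right_of_imp (h : GLP (ψ.imp φ)) : GLP ((φ.and ψ).iff ψ) :=
  iff_intro (and_right _ _) (imp_and h (imp_refl ψ))

theorem and_right_comm (φ ψ χ : Formula L) :
    GLP (((φ.and ψ).and χ).iff ((φ.and χ).and ψ)) := by
  have h (φ ψ χ : Formula L) : GLP (((φ.and ψ).and χ).imp ((φ.and χ).and ψ)) :=
    imp_and (imp_and (imp_trans (and_left _ _) (and_left _ _)) (and_right _ _))
      (imp_trans (and_left _ _) (and_right _ _))
  exact iff_intro (h φ ψ χ) (h φ χ ψ)

theorem and_and_and_comm (φ ψ χ θ : Formula L) :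
    GLP (((φ.and ψ).and (χ.and θ)).iff ((φ.and χ).and (ψ.and θ))) := by
  have h (φ ψ χ θ : Formula L) :
      GLP (((φ.and ψ).and (χ.and θ)).imp ((φ.and χ).and (ψ.and θ))) :=
    imp_and
      (imp_and (imp_trans (and_left _ _) (and_left _ _)) (imp_trans (and_right _ _) (and_left _ _)))
      (imp_and (imp_trans (and_left _ _) (and_right _ _)) (imp_trans (and_right _ _) (and_right _ _)))
  exact iff_intro (h φ ψ χ θ) (h φ χ ψ θ)

theorem box_mono (α : L) (h : GLP (φ.imp ψ)) : GLP ((box α φ).imp (box α ψ)) :=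
  mp _ _ (dist α φ ψ) (nec α _ h)

theorem dia_mono (α : L) (h : GLP (φ.imp ψ)) : GLP ((dia α φ).imp (dia α ψ)) :=
  contrapose (box_mono α (contrapose h))

theorem dia_congr (α : L) (h : GLP (φ.iff ψ)) : GLP ((dia α φ).iff (dia α ψ)) :=
  iff_intro (dia_mono α (iff_mp h)) (dia_mono α (iff_mpr h))

theorem dia_dia_imp (α : L) (φ : Formula L) : GLP ((dia α (dia α φ)).imp (dia α φ)) :=
  contrapose (imp_trans (trans α α φ.neg le_rfl) (box_mono α (imp_neg_neg _)))

theorem dia_imp_dia_of_le {α β : L} (h : α ≤ β) (φ : Formula L) :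
    GLP ((dia β φ).imp (dia α φ)) :=
  contrapose (mono α β φ.neg h)

theorem dia_and_box_imp (β : L) (φ ψ : Formula L) :
    GLP (((dia β φ).and (box β ψ)).imp (dia β (φ.and ψ))) := by
  have hψ : GLP (ψ.imp ((φ.and ψ).neg.imp φ.neg)) :=
    Entails.glp <| .deduction <| .deduction <| .deduction <|
      .mp .hyp₁ (.mp (.mp (.thm (imp_imp_and φ ψ)) .hyp₀) .hyp₂)
  have hbox : GLP ((box β ψ).imp ((box β (φ.and ψ).neg).imp (box β φ.neg))) :=
    imp_trans (box_mono β hψ) (dist β _ _)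
  exact Entails.glp <| .deduction <| .deduction <|
    .mp (.mp (.thm (and_left _ _)) .hyp₁)
      (.mp (.mp (.thm hbox) (.mp (.thm (and_right _ _)) .hyp₁)) .hyp₀)

theorem dia_and_dia_imp_of_lt {δ ε : L} (h : δ < ε) (φ ψ : Formula L) :
    GLP (((dia ε φ).and (dia δ ψ)).imp (dia ε (φ.and (dia δ ψ)))) :=
  imp_trans (imp_and (and_left _ _) (imp_trans (and_right _ _) (negintro δ ε ψ h)))
    (dia_and_box_imp ε φ (dia δ ψ))

theorem dia_and_dia_iff_of_lt {δ β : L} (h : δ < β) (φ ψ : Formula L) :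
    GLP ((dia β (φ.and (dia δ ψ))).iff ((dia β φ).and (dia δ ψ))) := by
  refine iff_intro (imp_and (dia_mono β (and_left _ _)) ?_) (dia_and_dia_imp_of_lt h φ ψ)
  exact imp_trans (imp_trans (dia_mono β (and_right _ _)) (dia_imp_dia_of_le h.le _))
    (dia_dia_imp δ ψ)

end GLP

section Worms

variable {L : Type} [LinearOrder L]

open GLP

theorem worm_append_imp (X Z : List L) : GLP ((worm (X ++ Z)).imp (worm X)) := by
  induction X with
  | nil => exact imp_top _
  | cons x X ih => exact dia_mono x ih

theorem worm_append_cons_imp_dia {δ : L} {X : List L} (hX : ∀ β ∈ X, δ ≤ β) (Y : List L) :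
    GLP ((worm (X ++ δ :: Y)).imp (dia δ (worm Y))) := by
  induction X with
  | nil => exact imp_refl _
  | cons x X ih =>
    have ih' := ih fun β hβ => hX β (by simp [hβ])
    exact imp_trans (imp_trans (dia_mono x ih') (dia_imp_dia_of_le (hX x (by simp)) _))
      (dia_dia_imp δ _)

theorem worm_append_cons_iff {δ : L} {P : List L} (hP : ∀ β ∈ P, δ < β) (Q : List L) :
    GLP ((worm (P ++ δ :: Q)).iff ((worm P).and (dia δ (worm Q)))) := by
  induction P with
  | nil => exact iff_symm (and_iff_right_of_imp (imp_top _))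
  | cons x P ih =>
    exact iff_trans (dia_congr x (ih fun β hβ => hP β (by simp [hβ])))
      (dia_and_dia_iff_of_lt (hP x (by simp)) _ _)

end Worms

section JoinSep

variable {L : Type} {δ : L}

theorem joinSep_cons (p : List L) {ps : List (List L)} (h : ps ≠ []) :
    joinSep δ (p :: ps) = p ++ δ :: joinSep δ ps := by
  cases ps with
  | nil => exact absurd rfl h
  | cons q qs => rfl

theorem joinSep_append {xs ys : List (List L)} (hx : xs ≠ []) (hy : ys ≠ []) :
    joinSep δ (xs ++ ys) = joinSep δ xs ++ δ :: joinSep δ ys := by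
  induction xs with
  | nil => exact absurd rfl hx
  | cons p xs ih =>
    rcases eq_or_ne xs [] with rfl | hxs
    · exact joinSep_cons p hy
    · rw [List.cons_append, joinSep_cons p (by simp [hxs]), joinSep_cons p hxs, ih hxs,
        List.append_assoc, List.cons_append]

theorem sep_mem_joinSep : ∀ {ps : List (List L)}, 2 ≤ ps.length → δ ∈ joinSep δ ps
  | p :: _ :: _, _ => List.mem_append_right p List.mem_cons_self

theorem le_of_mem_joinSep [LinearOrder L] {ps : List (List L)} (hm : ∀ p ∈ ps, ∀ β ∈ p, δ < β) :
    ∀ β ∈ joinSep δ ps, δ ≤ β := by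
  induction ps with
  | nil => simp [joinSep]
  | cons p ps ih =>
    rcases eq_or_ne ps [] with rfl | hps
    · exact fun β hβ => (hm p (by simp) β hβ).le
    · rw [joinSep_cons p hps]
      intro β hβ
      rcases List.mem_append.1 hβ with hβ | hβ
      · exact (hm p (by simp) β hβ).le
      rcases List.mem_cons.1 hβ with rfl | hβ
      · exact le_rfl
      · exact ih (fun r hr => hm r (by simp [hr])) β hβ

end JoinSep

namespace List

variable {X : Type}

theorem common_prefix_cases : ∀ l₁ l₂ : List X,
    l₁ = l₂ ∨ (∃ c t, l₂ = l₁ ++ c :: t) ∨ (∃ c t, l₁ = l₂ ++ c :: t) ∨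
      ∃ s c₁ t₁ c₂ t₂, c₁ ≠ c₂ ∧ l₁ = s ++ c₁ :: t₁ ∧ l₂ = s ++ c₂ :: t₂
  | [], [] => Or.inl rfl
  | [], c :: t => Or.inr (Or.inl ⟨c, t, rfl⟩)
  | c :: t, [] => Or.inr (Or.inr (Or.inl ⟨c, t, rfl⟩))
  | a :: t₁, b :: t₂ => by
    by_cases hab : a = b
    · subst hab
      rcases common_prefix_cases t₁ t₂ with
        rfl | ⟨c, t, rfl⟩ | ⟨c, t, rfl⟩ | ⟨s, c₁, u₁, c₂, u₂, hne, rfl, rfl⟩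
      · exact Or.inl rfl
      · exact Or.inr (Or.inl ⟨c, t, rfl⟩)
      · exact Or.inr (Or.inr (Or.inl ⟨c, t, rfl⟩))
      · exact Or.inr (Or.inr (Or.inr ⟨a :: s, c₁, u₁, c₂, u₂, hne, rfl, rfl⟩))
    · exact Or.inr (Or.inr (Or.inr ⟨[], a, t₁, b, t₂, hab, rfl, rfl⟩))

theorem common_suffix_cases (l₁ l₂ : List X) :
    l₁ = l₂ ∨ (∃ t c, l₂ = t ++ c :: l₁) ∨ (∃ t c, l₁ = t ++ c :: l₂) ∨
      ∃ t₁ c₁ t₂ c₂ s, c₁ ≠ c₂ ∧ l₁ = t₁ ++ c₁ :: s ∧ l₂ = t₂ ++ c₂ :: s := by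
  rcases common_prefix_cases l₁.reverse l₂.reverse with
    h | ⟨c, t, h⟩ | ⟨c, t, h⟩ | ⟨s, c₁, t₁, c₂, t₂, hne, h₁, h₂⟩
  · exact Or.inl (reverse_inj.1 h)
  · exact Or.inr (Or.inl ⟨t.reverse, c, by simpa using congrArg reverse h⟩)
  · exact Or.inr (Or.inr (Or.inl ⟨t.reverse, c, by simpa using congrArg reverse h⟩))
  · exact Or.inr (Or.inr (Or.inr ⟨t₁.reverse, c₁, t₂.reverse, c₂, s.reverse, hne,
      by simpa using congrArg reverse h₁, by simpa using congrArg reverse h₂⟩))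

end List

section WormOrder

variable {L : Type} [LinearOrder L] {γ δ ε : L} {X Y Z : List L}

open GLP

theorem Lt.dia_imp (h : Lt δ X Y) : GLP ((dia δ (worm Y)).imp (dia δ (worm X))) :=
  imp_trans (dia_mono δ h) (dia_dia_imp δ _)

theorem Lt.trans (h₁ : Lt ε X Y) (h₂ : Lt ε Y Z) : Lt ε X Z :=
  imp_trans h₂ h₁.dia_imp

theorem Le.trans_lt (h₁ : Le ε X Y) (h₂ : Lt ε Y Z) : Lt ε X Z := by
  rcases h₁ with h₁ | rfl
  exacts [h₁.trans h₂, h₂]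

theorem Lt.trans_le (h₁ : Lt ε X Y) (h₂ : Le ε Y Z) : Lt ε X Z := by
  rcases h₂ with h₂ | rfl
  exacts [h₁.trans h₂, h₁]

theorem Le.trans (h₁ : Le ε X Y) (h₂ : Le ε Y Z) : Le ε X Z := by
  rcases h₂ with h₂ | rfl
  exacts [Or.inl (h₁.trans_lt h₂), h₁]

instance : Trans (Le (L := L) ε) (Le ε) (Le ε) := ⟨Le.trans⟩

theorem Lt.weaken (h : γ ≤ δ) (hl : Lt δ X Y) : Lt γ X Y :=
  imp_trans hl (dia_imp_dia_of_le h _)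

theorem Lt.nil_left (hne : Y ≠ []) (hY : ∀ β ∈ Y, γ ≤ β) : Lt γ [] Y := by
  obtain ⟨y, Y, rfl⟩ := List.exists_cons_of_ne_nil hne
  exact imp_trans (dia_imp_dia_of_le (hY y (by simp)) _) (dia_mono γ (imp_top _))

def Comparable (γ : L) (X Y : List L) : Prop :=
  X = Y ∨ Lt γ X Y ∨ Lt γ Y X

theorem Comparable.weaken (h : γ ≤ δ) (hc : Comparable δ X Y) : Comparable γ X Y :=
  hc.imp_right (Or.imp (Lt.weaken h) (Lt.weaken h))

end WormOrder

section Comparison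

variable {L : Type} [LinearOrder L] {δ ε : L}

open GLP

theorem lt_joinSep_append {t s : List (List L)} (ht : t ≠ []) (hs : s ≠ [])
    (hm : ∀ p ∈ t, ∀ β ∈ p, δ < β) : Lt δ (joinSep δ s) (joinSep δ (t ++ s)) := by
  unfold Lt
  rw [joinSep_append ht hs]
  exact worm_append_cons_imp_dia (le_of_mem_joinSep hm) _

theorem le_joinSep_append_cons {t s : List (List L)} (c : List L)
    (hm : ∀ p ∈ t, ∀ β ∈ p, δ < β) : Le δ (joinSep δ (c :: s)) (joinSep δ (t ++ c :: s)) := by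
  rcases eq_or_ne t [] with rfl | ht
  · exact Or.inr rfl
  · exact Or.inl (lt_joinSep_append ht (List.cons_ne_nil c s) hm)

theorem worm_joinSep_cons_imp (c : List L) (s : List (List L)) :
    GLP ((worm (joinSep δ (c :: s))).imp (worm c)) := by
  rcases eq_or_ne s [] with rfl | hs
  · exact imp_refl _
  · rw [joinSep_cons c hs]
    exact worm_append_imp _ _

theorem imp_dia_append_cons (hδε : δ < ε) {D : Formula L} {p X : List L}
    (hp : ∀ β ∈ p, δ < β) (hε : GLP (D.imp (dia ε (worm p))))
    (hδ : GLP (D.imp (dia δ (worm X)))) : GLP (D.imp (dia δ (worm (p ++ δ :: X)))) :=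
  imp_trans (imp_and hε hδ) <| imp_trans (dia_and_dia_imp_of_lt hδε _ _) <|
    imp_trans (dia_mono ε (iff_mpr (worm_append_cons_iff hp X))) (dia_imp_dia_of_le hδε.le _)

theorem imp_dia_joinSep_append (hδε : δ < ε) {D : Formula L} {ys : List (List L)}
    (hys : ys ≠ []) (hD : GLP (D.imp (dia δ (worm (joinSep δ ys))))) :
    ∀ {t : List (List L)}, (∀ p ∈ t, ∀ β ∈ p, δ < β) →
      (∀ p ∈ t, GLP (D.imp (dia ε (worm p)))) →
      GLP (D.imp (dia δ (worm (joinSep δ (t ++ ys)))))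
  | [], _, _ => hD
  | p :: t, hm, hε => by
    rw [List.cons_append, joinSep_cons p (List.append_ne_nil_of_right_ne_nil t hys)]
    exact imp_dia_append_cons hδε (hm p (by simp)) (hε p (by simp))
      (imp_dia_joinSep_append hδε hys hD (fun r hr => hm r (by simp [hr]))
        fun r hr => hε r (by simp [hr]))

/-- Every block of the first worm before `c₁` is `≤_ε c₁ <_ε c₂`, so the tail `c₂ δ s` of the
second worm implies `⟨ε⟩` of each of them, and they are stacked one by one onto `⟨δ⟩(c₁ δ s)`. -/
theorem lt_joinSep_of_lt (hδε : δ < ε) {t₁ t₂ s : List (List L)} {c₁ c₂ : List L}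
    (hm₁ : ∀ p ∈ t₁, ∀ β ∈ p, δ < β) (hc₁ : ∀ β ∈ c₁, δ < β)
    (hm₂ : ∀ p ∈ t₂, ∀ β ∈ p, δ < β) (hc₂ : ∀ β ∈ c₂, δ < β)
    (hle : ∀ p ∈ t₁, Le ε p c₁) (hlt : Lt ε c₁ c₂) :
    Lt δ (joinSep δ (t₁ ++ c₁ :: s)) (joinSep δ (t₂ ++ c₂ :: s)) := by
  have hc₂' : GLP ((worm (joinSep δ (c₂ :: s))).imp (worm c₂)) := worm_joinSep_cons_imp c₂ s
  have hhead : Lt δ (joinSep δ (c₁ :: s)) (joinSep δ (c₂ :: s)) := by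
    rcases eq_or_ne s [] with rfl | hs
    · exact hlt.weaken hδε.le
    · have hS : GLP ((worm (joinSep δ (c₂ :: s))).imp (dia δ (worm (joinSep δ s)))) := by
        rw [joinSep_cons c₂ hs]
        exact worm_append_cons_imp_dia (fun β hβ => (hc₂ β hβ).le) _
      unfold Lt
      rw [joinSep_cons c₁ hs]
      exact imp_dia_append_cons hδε hc₁ (imp_trans hc₂' hlt) hS
  have htail : Lt δ (joinSep δ (t₁ ++ c₁ :: s)) (joinSep δ (c₂ :: s)) :=
    imp_dia_joinSep_append hδε (List.cons_ne_nil _ _) hhead hm₁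
      fun p hp => imp_trans hc₂' ((hle p hp).trans_lt hlt)
  exact htail.trans_le (le_joinSep_append_cons c₂ hm₂)

theorem comparable_joinSep [SuccOrder L] {pa pb : List (List L)} (ha : pa ≠ []) (hb : pb ≠ [])
    (hma : ∀ p ∈ pa, ∀ β ∈ p, δ < β) (hmb : ∀ p ∈ pb, ∀ β ∈ p, δ < β)
    (hca : pa.IsChain (Le (Order.succ δ))) (hcb : pb.IsChain (Le (Order.succ δ)))
    (hcmp : ∀ c₁ ∈ pa, ∀ c₂ ∈ pb, Comparable (Order.succ δ) c₁ c₂) :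
    Comparable δ (joinSep δ pa) (joinSep δ pb) := by
  rcases List.common_suffix_cases pa pb with
    rfl | ⟨t, c, rfl⟩ | ⟨t, c, rfl⟩ | ⟨t₁, c₁, t₂, c₂, s, hne, rfl, rfl⟩
  · exact Or.inl rfl
  · refine Or.inr (Or.inl ?_)
    rw [← List.singleton_append, ← List.append_assoc]
    exact lt_joinSep_append (by simp) ha fun p hp => hmb p (by simp at hp ⊢; tauto)
  · refine Or.inr (Or.inr ?_)
    rw [← List.singleton_append, ← List.append_assoc]
    exact lt_joinSep_append (by simp) hb fun p hp => hma p (by simp at hp ⊢; tauto)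
  · have hδ : δ < Order.succ δ := by
      have : c₁ ≠ [] ∨ c₂ ≠ [] := by
        by_contra! h
        exact hne (h.1.trans h.2.symm)
      rcases this with h | h
      · obtain ⟨β, hβ⟩ := List.exists_mem_of_ne_nil c₁ h
        exact Order.lt_succ_of_not_isMax (hma c₁ (by simp) β hβ).not_isMax
      · obtain ⟨β, hβ⟩ := List.exists_mem_of_ne_nil c₂ h
        exact Order.lt_succ_of_not_isMax (hmb c₂ (by simp) β hβ).not_isMax
    have hle {t s : List (List L)} {c : List L} (h : (t ++ c :: s).IsChain (Le (Order.succ δ))) :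
        ∀ p ∈ t, Le (Order.succ δ) p c :=
      fun p hp => (List.pairwise_append.1 h.pairwise).2.2 p hp c List.mem_cons_self
    rcases hcmp c₁ (by simp) c₂ (by simp) with h | h | h
    · exact absurd h hne
    · exact Or.inr (Or.inl (lt_joinSep_of_lt hδ (fun p hp => hma p (by simp [hp]))
        (hma c₁ (by simp)) (fun p hp => hmb p (by simp [hp])) (hmb c₂ (by simp)) (hle hca) h))
    · exact Or.inr (Or.inr (lt_joinSep_of_lt hδ (fun p hp => hmb p (by simp [hp]))
        (hmb c₂ (by simp)) (fun p hp => hma p (by simp [hp])) (hma c₁ (by simp)) (hle hcb) h))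

end Comparison

section NormalForm

variable {L : Type} [LinearOrder L] [SuccOrder L]

theorem wnf_joinSep {δ : L} : ∀ {ps : List (List L)}, ps ≠ [] →
    (∀ p ∈ ps, ∀ β ∈ p, δ < β) → (∀ p ∈ ps, WNF p) → ps.IsChain (Le (Order.succ δ)) →
    WNF (joinSep δ ps)
  | [p], _, _, hw, _ => hw p (by simp)
  | _ :: _ :: _, _, hm, hw, hc => WNF.node δ _ (by simp) hm hw hc

theorem WNF.comparable {A B : List L} (hA : WNF A) (hB : WNF B) {γ : L}
    (hAγ : ∀ β ∈ A, γ ≤ β) (hBγ : ∀ β ∈ B, γ ≤ β) : Comparable γ A B := by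
  induction hA generalizing B γ with
  | nil =>
    cases hB with
    | nil => exact Or.inl rfl
    | node δ qs hlen _ _ _ =>
      exact Or.inr (Or.inl (Lt.nil_left (List.ne_nil_of_mem (sep_mem_joinSep hlen)) hBγ))
  | node δa pas hla hma hwa hoa ihA =>
    induction hB generalizing γ with
    | nil => exact Or.inr (Or.inr (Lt.nil_left (List.ne_nil_of_mem (sep_mem_joinSep hla)) hAγ))
    | node δb pbs hlb hmb hwb hob ihB =>
      have hpas : pas ≠ [] := List.ne_nil_of_length_pos (by omega)
      have hpbs : pbs ≠ [] := List.ne_nil_of_length_pos (by omega)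
      rcases lt_trichotomy δa δb with h | rfl | h
      · have hB : ∀ β ∈ joinSep δb pbs, δa < β :=
          fun β hβ => h.trans_le (le_of_mem_joinSep hmb β hβ)
        refine Comparable.weaken (hAγ δa (sep_mem_joinSep hla)) (comparable_joinSep
          (pb := [joinSep δb pbs]) hpas (List.cons_ne_nil _ _) hma (by simpa using hB) hoa
          (List.isChain_singleton _) fun c₁ hc₁ c₂ hc₂ => ?_)
        obtain rfl := List.mem_singleton.1 hc₂
        exact ihA c₁ hc₁ (WNF.node δb pbs hlb hmb hwb hob)
          (fun β hβ => Order.succ_le_of_lt (hma c₁ hc₁ β hβ))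
          fun β hβ => Order.succ_le_of_lt (hB β hβ)
      · exact Comparable.weaken (hAγ δa (sep_mem_joinSep hla))
          (comparable_joinSep hpas hpbs hma hmb hoa hob fun c₁ hc₁ c₂ hc₂ =>
            ihA c₁ hc₁ (hwb c₂ hc₂) (fun β hβ => Order.succ_le_of_lt (hma c₁ hc₁ β hβ))
              fun β hβ => Order.succ_le_of_lt (hmb c₂ hc₂ β hβ))
      · have hA : ∀ β ∈ joinSep δa pas, δb < β :=
          fun β hβ => h.trans_le (le_of_mem_joinSep hma β hβ)
        refine Comparable.weaken (hBγ δb (sep_mem_joinSep hlb)) (comparable_joinSep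
          (pa := [joinSep δa pas]) (List.cons_ne_nil _ _) hpbs (by simpa using hA) hmb
          (List.isChain_singleton _) hob fun c₁ hc₁ c₂ hc₂ => ?_)
        obtain rfl := List.mem_singleton.1 hc₁
        exact ihB c₂ hc₂ (fun β hβ => Order.succ_le_of_lt (hA β hβ))
          fun β hβ => Order.succ_le_of_lt (hmb c₂ hc₂ β hβ)

end NormalForm

section Conjunction

variable {L : Type} [LinearOrder L]

open GLP

def IsWormConj (A B C : List L) : Prop :=
  GLP (((worm A).and (worm B)).iff (worm C)) ∧ C ⊆ A ++ B ∧ C.length ≤ A.length + B.length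

namespace IsWormConj

variable {A B C p q R S K : List L} {δ : L}

theorem symm (h : IsWormConj A B C) : IsWormConj B A C :=
  ⟨iff_trans (and_comm _ _) h.1, List.Subset.trans h.2.1 List.perm_append_comm.subset, by
    have := h.2.2; omega⟩

theorem of_imp_left (h : GLP ((worm A).imp (worm B))) : IsWormConj A B A :=
  ⟨and_iff_left_of_imp h, List.subset_append_left _ _, by omega⟩

theorem of_imp_right (h : GLP ((worm B).imp (worm A))) : IsWormConj A B B :=
  ⟨and_iff_right_of_imp h, List.subset_append_right _ _, by omega⟩

theorem append_cons (hp : ∀ β ∈ p, δ < β) (hB : ∀ β ∈ B, δ < β) (h : IsWormConj p B C) :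
    IsWormConj (p ++ δ :: R) B (C ++ δ :: R) := by
  obtain ⟨hiff, hsub, hlen⟩ := h
  have hC : ∀ β ∈ C, δ < β := fun β hβ => (List.mem_append.1 (hsub hβ)).elim (hp β) (hB β)
  refine ⟨?_, ?_, by simp; omega⟩
  · exact iff_trans (and_congr_left (worm_append_cons_iff hp R)) <|
      iff_trans (and_right_comm _ _ _) <|
      iff_trans (and_congr_left hiff) (iff_symm (worm_append_cons_iff hC R))
  · intro β hβ
    have := @hsub β
    simp only [List.mem_append, List.mem_cons] at this hβ ⊢
    tauto

theorem append_cons_append_cons (hp : ∀ β ∈ p, δ < β) (hq : ∀ β ∈ q, δ < β)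
    (h : IsWormConj p q C) (hK : IsWormConj (δ :: R) (δ :: S) (δ :: K)) :
    IsWormConj (p ++ δ :: R) (q ++ δ :: S) (C ++ δ :: K) := by
  obtain ⟨hiff, hsub, hlen⟩ := h
  obtain ⟨hKiff, hKsub, hKlen⟩ := hK
  have hC : ∀ β ∈ C, δ < β := fun β hβ => (List.mem_append.1 (hsub hβ)).elim (hp β) (hq β)
  refine ⟨?_, ?_, by simp at hKlen ⊢; omega⟩
  · exact iff_trans (and_congr (worm_append_cons_iff hp R) (worm_append_cons_iff hq S)) <|
      iff_trans (and_and_and_comm _ _ _ _) <|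
      iff_trans (and_congr hiff hKiff) (iff_symm (worm_append_cons_iff hC K))
  · intro β hβ
    have := @hsub β
    have := @hKsub β
    simp only [List.mem_append, List.mem_cons] at *
    tauto

end IsWormConj

theorem Comparable.exists_isWormConj_cons {δ : L} {R S : List L} (h : Comparable δ R S) :
    ∃ K, IsWormConj (δ :: R) (δ :: S) (δ :: K) := by
  rcases h with rfl | h | h
  · exact ⟨R, .of_imp_left (imp_refl _)⟩
  · exact ⟨S, .of_imp_right h.dia_imp⟩
  · exact ⟨R, .of_imp_left h.dia_imp⟩

theorem WNF.exists_isWormConj [SuccOrder L] {A B : List L} (hA : WNF A) (hB : WNF B) :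
    ∃ C, IsWormConj A B C := by
  induction hA generalizing B with
  | nil => exact ⟨B, .of_imp_right (imp_top _)⟩
  | node δa pas hla hma hwa hoa ihA =>
    induction hB with
    | nil => exact ⟨_, .of_imp_left (imp_top _)⟩
    | node δb pbs hlb hmb hwb hob ihB =>
      obtain ⟨p, ps, rfl⟩ := List.exists_cons_of_length_pos (by omega : 0 < pas.length)
      obtain ⟨q, qs, rfl⟩ := List.exists_cons_of_length_pos (by omega : 0 < pbs.length)
      have hps : ps ≠ [] := List.ne_nil_of_length_pos (by simp at hla; omega)
      have hqs : qs ≠ [] := List.ne_nil_of_length_pos (by simp at hlb; omega)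
      have hp := hma p (by simp)
      have hq := hmb q (by simp)
      rcases lt_trichotomy δa δb with h | rfl | h
      · obtain ⟨C, hC⟩ := ihA p (by simp) (WNF.node δb _ hlb hmb hwb hob)
        rw [joinSep_cons p hps]
        exact ⟨_, hC.append_cons hp fun β hβ => h.trans_le (le_of_mem_joinSep hmb β hβ)⟩
      · obtain ⟨C, hC⟩ := ihA p (by simp) (hwb q (by simp))
        have hR := wnf_joinSep hps (fun r hr => hma r (by simp [hr]))
          (fun r hr => hwa r (by simp [hr])) hoa.tail
        have hS := wnf_joinSep hqs (fun r hr => hmb r (by simp [hr]))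
          (fun r hr => hwb r (by simp [hr])) hob.tail
        obtain ⟨K, hK⟩ := (hR.comparable hS
          (le_of_mem_joinSep fun r hr => hma r (by simp [hr]))
          (le_of_mem_joinSep fun r hr => hmb r (by simp [hr]))).exists_isWormConj_cons
        rw [joinSep_cons p hps, joinSep_cons q hqs]
        exact ⟨_, hC.append_cons_append_cons hp hq hK⟩
      · obtain ⟨C, hC⟩ := ihB q (by simp)
        rw [joinSep_cons q hqs]
        exact ⟨_, (hC.symm.append_cons hq fun β hβ =>
          h.trans_le (le_of_mem_joinSep hma β hβ)).symm⟩

end Conjunction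

/-- For `A, B ∈ 𝕎°_α` there is a worm `C ∈ 𝕎_α` with `GLP ⊢ (A ∧ B) ↔ C`,
whose modalities are among those of `A` and `B` and whose length is at most
`l(A) + l(B)`. -/
theorem worm_conjunction {L : Type} [LinearOrder L] [SuccOrder L] (α : L)
    (A B : List L)
    (hAm : ∀ β ∈ A, α ≤ β) (hBm : ∀ β ∈ B, α ≤ β)
    (hA : WNF A) (hB : WNF B) :
    ∃ C : List L, (∀ β ∈ C, α ≤ β) ∧
      GLP (((worm A).and (worm B)).iff (worm C)) ∧
      (∀ β ∈ C, β ∈ A ++ B) ∧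
      C.length ≤ A.length + B.length := by
  obtain ⟨C, hiff, hsub, hlen⟩ := hA.exists_isWormConj hB
  refine ⟨C, fun β hβ => ?_, hiff, hsub, hlen⟩
  exact (List.mem_append.1 (hsub hβ)).elim (hAm β) (hBm β)
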